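/- arXiv:1310.7628 — 2 statements merged into one kernel-verified Lean document; each statement's English description precedes it below -/
import Mathlib

section
/- Fix γ > 0 and ρ > 0. For λ > 0, set √ω_λ := λρ/4 + 2/γ, x̄_λ := (1/(2√ω_λ))·log((γ√ω_λ + 2)/(γ√ω_λ − 2)), and define the antisymmetric stationary state φ_λ(x) := −√(2ω_λ/λ)·sech(√ω_λ(x − x̄_λ)) for x < 0 and φ_λ(x) := √(2ω_λ/λ)·sech(√ω_λ(x + x̄_λ)) for x > 0. Let g(x) := sgn(x)·√(2ρ/γ)·e^{−(2/γ)|x|}. Then, as λ → 0+, ∫_ℝ |φ_λ(x) − g(x)|² dx + ∫_{ℝ∖{0}} |φ_λ'(x) − g'(x)|² dx → 0; i.e., φ_λ converges strongly in H¹(ℝ⁻) ⊕ H¹(ℝ⁺) to the linear ground state of the delta-prime Hamiltonian of mass ρ. -/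
/-!
Write σ = √ω_λ. Since e^{σ x̄_λ} = √((γσ + 2)/(γσ - 2)), on x > 0 the state is
φ_λ(x) = σ √(γρ/2) √(γσ + 2) / (γσ cosh σx + 2 sinh σx) (`profile`), a formula that still makes
sense at σ = 2/γ, where it is the linear ground state √(2ρ/γ) e^{-(2/γ)x}. For σ ≥ 2/γ the
denominator is at least 2e^{σx}, so on σ ∈ [2/γ, 2/γ + 1] the profile and its x-derivative are
dominated by a multiple of e^{-(2/γ)x}. Both φ_λ and g are odd, so each integral is twice an
integral over (0, ∞), and dominated convergence as σ ↓ 2/γ finishes the proof.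
-/

open MeasureTheory Real Filter Set Topology

noncomputable section

def sech (x : ℝ) : ℝ := 1 / Real.cosh x

theorem tendsto_integral_sq_sub_of_dominated {α ι : Type*} [MeasurableSpace α] {μ : Measure α}
    {l : Filter ι} [l.IsCountablyGenerated] {F : ι → α → ℝ} {f b : α → ℝ}
    (hF_meas : ∀ᶠ i in l, AEStronglyMeasurable (F i) μ) (hf_meas : AEStronglyMeasurable f μ)
    (hb : Integrable (fun x => b x ^ 2) μ) (hF_le : ∀ᶠ i in l, ∀ᵐ x ∂μ, |F i x| ≤ b x)
    (hf_le : ∀ᵐ x ∂μ, |f x| ≤ b x) (hlim : ∀ᵐ x ∂μ, Tendsto (fun i => F i x) l (𝓝 (f x))) :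
    Tendsto (fun i => ∫ x, (F i x - f x) ^ 2 ∂μ) l (𝓝 0) := by
  have h := tendsto_integral_filter_of_dominated_convergence
    (F := fun i x => (F i x - f x) ^ 2) (fun x => 4 * b x ^ 2)
    (hF_meas.mono fun i hi => (hi.sub hf_meas).pow 2) ?_ (hb.const_mul 4)
    (hlim.mono fun x hx => (hx.sub_const (f x)).pow 2)
  · simpa using h
  filter_upwards [hF_le] with i hi
  filter_upwards [hi, hf_le] with x hFx hfx
  rw [norm_pow, Real.norm_eq_abs, sq_abs]
  nlinarith [abs_le.1 hFx, abs_le.1 hfx]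

theorem tendsto_integral_Ioi_sq_sub_of_le_exp {ι : Type*} {l : Filter ι} [l.IsCountablyGenerated]
    {F : ι → ℝ → ℝ} {f : ℝ → ℝ} {K a : ℝ} (ha : 0 < a)
    (hF : ∀ᶠ i in l, Continuous (F i)) (hf : Continuous f)
    (hF_le : ∀ᶠ i in l, ∀ x, 0 < x → |F i x| ≤ K * exp (-a * x))
    (hf_le : ∀ x, 0 < x → |f x| ≤ K * exp (-a * x))
    (hlim : ∀ x, 0 < x → Tendsto (fun i => F i x) l (𝓝 (f x))) :
    Tendsto (fun i => ∫ x in Ioi 0, (F i x - f x) ^ 2) l (𝓝 0) := by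
  have hb : IntegrableOn (fun x => (K * exp (-a * x)) ^ 2) (Ioi 0) := by
    simp_rw [mul_pow, ← exp_nat_mul, ← mul_assoc, show ((2 : ℕ) : ℝ) * -a = -(2 * a) by ring]
    exact (exp_neg_integrableOn_Ioi 0 (by positivity)).const_mul _
  exact tendsto_integral_sq_sub_of_dominated (hF.mono fun i hi => hi.aestronglyMeasurable)
    hf.aestronglyMeasurable hb
    (hF_le.mono fun i hi => ae_restrict_of_forall_mem measurableSet_Ioi hi)
    (ae_restrict_of_forall_mem measurableSet_Ioi hf_le)
    (ae_restrict_of_forall_mem measurableSet_Ioi hlim)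

theorem sign_sq_of_ne_zero {x : ℝ} (hx : x ≠ 0) : Real.sign x ^ 2 = 1 := by
  rcases Real.sign_apply_eq_of_ne_zero x hx with h | h <;> rw [h] <;> norm_num

theorem ite_neg_eq_sign_mul_comp_abs (f : ℝ → ℝ) {x : ℝ} (hx : x ≠ 0) :
    (if x < 0 then -f (-x) else f x) = Real.sign x * f |x| := by
  rcases hx.lt_or_gt with h | h
  · simp [h, Real.sign_of_neg h, abs_of_neg h]
  · simp [h.not_gt, Real.sign_of_pos h, abs_of_pos h]

theorem hasDerivAt_of_eq_sign_mul_comp_abs {u f : ℝ → ℝ} {f' x : ℝ}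
    (hu : ∀ y, y ≠ 0 → u y = Real.sign y * f |y|) (hx : x ≠ 0) (hf : HasDerivAt f f' |x|) :
    HasDerivAt u f' x := by
  rcases hx.lt_or_gt with h | h
  · rw [abs_of_neg h] at hf
    have hu' : u =ᶠ[𝓝 x] fun y => -f (-y) := by
      filter_upwards [Iio_mem_nhds h] with y hy
      rw [hu y (ne_of_lt hy), Real.sign_of_neg hy, abs_of_neg hy]; ring
    simpa using ((hf.comp x (hasDerivAt_neg x)).neg).congr_of_eventuallyEq hu'
  · rw [abs_of_pos h] at hf
    refine hf.congr_of_eventuallyEq ?_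
    filter_upwards [Ioi_mem_nhds h] with y hy
    rw [hu y (ne_of_gt hy), Real.sign_of_pos hy, abs_of_pos hy, one_mul]

theorem integral_eq_two_mul_integral_Ioi_of_comp_abs {u f : ℝ → ℝ}
    (hu : ∀ x, x ≠ 0 → u x = f |x|) : ∫ x, u x = 2 * ∫ x in Ioi 0, f x := by
  rw [← integral_comp_abs, ← restrict_compl_singleton (μ := volume) (0 : ℝ),
    ← restrict_compl_singleton (μ := volume) (0 : ℝ)]
  exact setIntegral_congr_fun (measurableSet_singleton 0).compl hu

theorem integral_sq_sub_eq_of_eq_sign_mul_comp_abs {u v f h : ℝ → ℝ}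
    (hu : ∀ x, x ≠ 0 → u x = Real.sign x * f |x|) (hv : ∀ x, x ≠ 0 → v x = Real.sign x * h |x|) :
    ∫ x, (u x - v x) ^ 2 = 2 * ∫ x in Ioi 0, (f x - h x) ^ 2 :=
  integral_eq_two_mul_integral_Ioi_of_comp_abs fun x hx => by
    rw [hu x hx, hv x hx, ← mul_sub, mul_pow, sign_sq_of_ne_zero hx, one_mul]

theorem setIntegral_compl_zero_sq_deriv_sub_eq {u v f h f' h' : ℝ → ℝ}
    (hu : ∀ x, x ≠ 0 → u x = Real.sign x * f |x|) (hv : ∀ x, x ≠ 0 → v x = Real.sign x * h |x|)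
    (hf : ∀ x, 0 < x → HasDerivAt f (f' x) x) (hh : ∀ x, 0 < x → HasDerivAt h (h' x) x) :
    ∫ x in {0}ᶜ, (deriv u x - deriv v x) ^ 2 = 2 * ∫ x in Ioi 0, (f' x - h' x) ^ 2 := by
  rw [restrict_compl_singleton]
  refine integral_eq_two_mul_integral_Ioi_of_comp_abs fun x hx => ?_
  rw [(hasDerivAt_of_eq_sign_mul_comp_abs hu hx (hf |x| (abs_pos.2 hx))).deriv,
    (hasDerivAt_of_eq_sign_mul_comp_abs hv hx (hh |x| (abs_pos.2 hx))).deriv]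

theorem two_mul_sqrt_mul_mul_cosh_add_log_div {a b : ℝ} (ha : 0 < a) (hb : 0 < b) (u : ℝ) :
    2 * √(a * b) * cosh (u + log (a / b) / 2) = a * exp u + b * exp (-u) := by
  have hexp : exp (log (a / b) / 2) = √a / √b := by
    rw [← sqrt_div ha.le, sqrt_eq_rpow, rpow_def_of_pos (div_pos ha hb)]
    ring_nf
  have hb' : 0 < √b := sqrt_pos.2 hb
  have ha' : 0 < √a := sqrt_pos.2 ha
  rw [cosh_eq, neg_add, exp_add, exp_add, exp_neg (log (a / b) / 2), hexp, sqrt_mul ha.le]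
  field_simp
  rw [sq_sqrt ha.le, sq_sqrt hb.le]
  ring

theorem sech_neg (x : ℝ) : sech (-x) = sech x := by
  rw [sech, sech, cosh_neg]

namespace DeltaPrimeNLS

def denom (γ σ x : ℝ) : ℝ := γ * σ * cosh (σ * x) + 2 * sinh (σ * x)

def denomDeriv (γ σ x : ℝ) : ℝ := σ * (γ * σ * sinh (σ * x) + 2 * cosh (σ * x))

def amp (γ c σ : ℝ) : ℝ := c * σ * √(γ * σ + 2)

def profile (γ c σ x : ℝ) : ℝ := amp γ c σ / denom γ σ x

def profileDeriv (γ c σ x : ℝ) : ℝ := -(amp γ c σ * denomDeriv γ σ x) / denom γ σ x ^ 2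

variable {γ c σ x : ℝ}

theorem two_mul_exp_le_denom (h : 2 ≤ γ * σ) (x : ℝ) : 2 * exp (σ * x) ≤ denom γ σ x := by
  rw [denom, ← cosh_add_sinh]
  nlinarith [cosh_pos (σ * x)]

theorem denom_pos (h : 2 ≤ γ * σ) (x : ℝ) : 0 < denom γ σ x :=
  lt_of_lt_of_le (by positivity) (two_mul_exp_le_denom h x)

theorem denom_two_div (hγ : γ ≠ 0) (x : ℝ) : denom γ (2 / γ) x = 2 * exp (2 / γ * x) := by
  rw [denom, mul_div_cancel₀ _ hγ, ← cosh_add_sinh]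
  ring

theorem two_mul_denom (γ σ x : ℝ) :
    2 * denom γ σ x = (γ * σ + 2) * exp (σ * x) + (γ * σ - 2) * exp (-(σ * x)) := by
  rw [denom, cosh_eq, sinh_eq]
  ring

theorem hasDerivAt_denom (γ σ x : ℝ) : HasDerivAt (denom γ σ) (denomDeriv γ σ x) x := by
  have hu : HasDerivAt (fun y => σ * y) σ x := by simpa using (hasDerivAt_id x).const_mul σ
  exact ((hu.cosh.const_mul (γ * σ)).add (hu.sinh.const_mul 2)).congr_deriv
    (by rw [denomDeriv]; ring)

theorem denomDeriv_nonneg (hσ : 0 ≤ σ) (hγσ : 0 ≤ γ * σ) (hx : 0 ≤ x) :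
    0 ≤ denomDeriv γ σ x :=
  mul_nonneg hσ (add_nonneg (mul_nonneg hγσ (sinh_nonneg_iff.2 (mul_nonneg hσ hx)))
    (mul_nonneg zero_le_two (cosh_pos _).le))

theorem denomDeriv_le (hσ : 0 ≤ σ) (h : 2 ≤ γ * σ) (x : ℝ) :
    denomDeriv γ σ x ≤ σ * denom γ σ x := by
  have hdiff : σ * denom γ σ x - denomDeriv γ σ x = σ * (γ * σ - 2) * exp (-(σ * x)) := by
    rw [denom, denomDeriv, ← cosh_sub_sinh]
    ring
  have : 0 ≤ σ * (γ * σ - 2) * exp (-(σ * x)) := by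
    have : 0 ≤ γ * σ - 2 := by linarith
    positivity
  linarith

theorem hasDerivAt_profile (h : 2 ≤ γ * σ) (c x : ℝ) :
    HasDerivAt (profile γ c σ) (profileDeriv γ c σ x) x :=
  ((hasDerivAt_const x (amp γ c σ)).div (hasDerivAt_denom γ σ x)
    (denom_pos h x).ne').congr_deriv (by rw [profileDeriv]; ring)

theorem abs_profile_le (h : 2 ≤ γ * σ) (c x : ℝ) :
    |profile γ c σ x| ≤ |amp γ c σ| / 2 * exp (-(σ * x)) := by
  have hd := denom_pos h x
  rw [profile, abs_div, abs_of_pos hd, div_le_iff₀ hd, exp_neg]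
  calc |amp γ c σ| = |amp γ c σ| / 2 * (exp (σ * x))⁻¹ * (2 * exp (σ * x)) := by
        field_simp
    _ ≤ |amp γ c σ| / 2 * (exp (σ * x))⁻¹ * denom γ σ x := by
        gcongr; exact two_mul_exp_le_denom h x

theorem abs_profileDeriv_le (hσ : 0 ≤ σ) (h : 2 ≤ γ * σ) (c : ℝ) (hx : 0 ≤ x) :
    |profileDeriv γ c σ x| ≤ σ * |profile γ c σ x| := by
  have hd := denom_pos h x
  have hD := denomDeriv_nonneg hσ (by linarith) hx (γ := γ)
  rw [profileDeriv, profile, abs_div, abs_div, abs_neg, abs_mul, abs_of_nonneg hD,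
    abs_of_pos hd, abs_of_pos (pow_pos hd 2), div_le_iff₀ (pow_pos hd 2)]
  calc |amp γ c σ| * denomDeriv γ σ x ≤ |amp γ c σ| * (σ * denom γ σ x) := by
        gcongr; exact denomDeriv_le hσ h x
    _ = σ * (|amp γ c σ| / denom γ σ x) * denom γ σ x ^ 2 := by
        field_simp

theorem profile_two_div (hγ : γ ≠ 0) (c x : ℝ) :
    profile γ c (2 / γ) x = c * (2 / γ) * exp (-(2 / γ * x)) := by
  rw [profile, amp, denom_two_div hγ, mul_div_cancel₀ _ hγ, exp_neg,
    show (2 : ℝ) + 2 = 2 ^ 2 by norm_num, sqrt_sq zero_le_two]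
  field_simp

theorem sign_mul_sqrt_mul_exp_eq_profile {ρ : ℝ} (hγ : 0 < γ) (x : ℝ) :
    Real.sign x * √(2 * ρ / γ) * exp (-(2 / γ) * |x|) =
      Real.sign x * profile γ √(γ * ρ / 2) (2 / γ) |x| := by
  have hamp : √(2 * ρ / γ) = √(γ * ρ / 2) * (2 / γ) := by
    rw [← sqrt_sq (by positivity : 0 ≤ 2 / γ), ← sqrt_mul' _ (sq_nonneg _)]
    congr 1
    field_simp
  rw [profile_two_div hγ.ne', hamp]
  ring_nf

theorem continuous_profile (h : 2 ≤ γ * σ) (c : ℝ) : Continuous (profile γ c σ) :=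
  continuous_const.div (by unfold denom; fun_prop) fun x => (denom_pos h x).ne'

theorem continuous_profileDeriv (h : 2 ≤ γ * σ) (c : ℝ) : Continuous (profileDeriv γ c σ) :=
  (by unfold denomDeriv; fun_prop : Continuous fun x => -(amp γ c σ * denomDeriv γ σ x)).div
    (by unfold denom; fun_prop) fun x => (pow_pos (denom_pos h x) 2).ne'

theorem continuousAt_profile_param (h : 2 ≤ γ * σ) (c x : ℝ) :
    ContinuousAt (fun τ => profile γ c τ x) σ :=
  (by unfold amp; fun_prop : ContinuousAt (fun τ => amp γ c τ) σ).div
    (by unfold denom; fun_prop) (denom_pos h x).ne'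

theorem continuousAt_profileDeriv_param (h : 2 ≤ γ * σ) (c x : ℝ) :
    ContinuousAt (fun τ => profileDeriv γ c τ x) σ :=
  (by unfold amp denomDeriv; fun_prop :
      ContinuousAt (fun τ => -(amp γ c τ * denomDeriv γ τ x)) σ).div
    (by unfold denom; fun_prop) (pow_pos (denom_pos h x) 2).ne'

theorem sqrt_mul_sech_eq_profile {ρ lam : ℝ} (hγ : 0 < γ) (hρ : 0 < ρ) (hlam : 0 < lam)
    (hσ : σ = lam * ρ / 4 + 2 / γ) (x : ℝ) :
    √(2 * σ ^ 2 / lam) * sech (σ * (x + 1 / (2 * σ) * log ((γ * σ + 2) / (γ * σ - 2)))) =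
      profile γ √(γ * ρ / 2) σ x := by
  have hσ_pos : 0 < σ := by rw [hσ]; positivity
  have hgap : γ * σ - 2 = γ * lam * ρ / 4 := by rw [hσ]; field_simp; ring
  have hb : 0 < γ * σ - 2 := by rw [hgap]; positivity
  have ha : 0 < γ * σ + 2 := by linarith
  have hcosh : √((γ * σ + 2) * (γ * σ - 2)) *
      cosh (σ * (x + 1 / (2 * σ) * log ((γ * σ + 2) / (γ * σ - 2)))) = denom γ σ x := by
    have := two_mul_sqrt_mul_mul_cosh_add_log_div ha hb (σ * x)
    rw [← two_mul_denom] at this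
    rw [show σ * (x + 1 / (2 * σ) * log ((γ * σ + 2) / (γ * σ - 2)))
      = σ * x + log ((γ * σ + 2) / (γ * σ - 2)) / 2 by field_simp]
    linarith
  have hamp : √(2 * σ ^ 2 / lam) * √((γ * σ + 2) * (γ * σ - 2)) = amp γ √(γ * ρ / 2) σ := by
    rw [amp, ← sqrt_sq hσ_pos.le, ← sqrt_mul (by positivity), ← sqrt_mul (by positivity),
      ← sqrt_mul (by positivity), sqrt_sq hσ_pos.le]
    congr 1
    rw [hgap]
    field_simp
    norm_num
  have hd : 0 < √((γ * σ + 2) * (γ * σ - 2)) := sqrt_pos.2 (by positivity)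
  rw [profile, ← hcosh, ← hamp, sech, mul_comm √((γ * σ + 2) * (γ * σ - 2)) (cosh _),
    mul_div_mul_right _ _ hd.ne', mul_one_div]

theorem stationaryState_eq_sign_mul_profile {ρ lam xb : ℝ} (hγ : 0 < γ) (hρ : 0 < ρ)
    (hlam : 0 < lam) (hσ : σ = lam * ρ / 4 + 2 / γ)
    (hxb : xb = 1 / (2 * σ) * log ((γ * σ + 2) / (γ * σ - 2))) (hx : x ≠ 0) :
    (if x < 0 then -(√(2 * σ ^ 2 / lam) * sech (σ * (x - xb)))
      else √(2 * σ ^ 2 / lam) * sech (σ * (x + xb))) =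
      Real.sign x * profile γ √(γ * ρ / 2) σ |x| := by
  have key (y : ℝ) : √(2 * σ ^ 2 / lam) * sech (σ * (y + xb)) = profile γ √(γ * ρ / 2) σ y := by
    rw [hxb]; exact sqrt_mul_sech_eq_profile hγ hρ hlam hσ y
  rw [← ite_neg_eq_sign_mul_comp_abs _ hx, ← key, ← key,
    show σ * (x - xb) = -(σ * (-x + xb)) by ring, sech_neg]

theorem abs_amp_le (hγ : 0 ≤ γ) (hσ : 0 ≤ σ) {σ₁ : ℝ} (h : σ ≤ σ₁) (c : ℝ) :
    |amp γ c σ| ≤ |amp γ c σ₁| := by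
  simp only [amp, abs_mul, abs_of_nonneg hσ, abs_of_nonneg (hσ.trans h),
    abs_of_nonneg (sqrt_nonneg _)]
  have : 0 ≤ |c| * σ₁ := mul_nonneg (abs_nonneg c) (hσ.trans h)
  gcongr

theorem abs_profile_le_of_mem_Icc (hγ : 0 < γ) {σ₁ : ℝ} (hσ : σ ∈ Icc (2 / γ) σ₁) (c : ℝ)
    (hx : 0 ≤ x) : |profile γ c σ x| ≤ |amp γ c σ₁| / 2 * exp (-(2 / γ) * x) := by
  have hσ₀ : 0 ≤ σ := le_trans (by positivity) hσ.1
  calc |profile γ c σ x| ≤ |amp γ c σ| / 2 * exp (-(σ * x)) :=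
        abs_profile_le ((div_le_iff₀' hγ).1 hσ.1) c x
    _ ≤ |amp γ c σ₁| / 2 * exp (-(2 / γ) * x) := by
        gcongr ?_ / 2 * exp ?_
        · exact abs_amp_le hγ.le hσ₀ hσ.2 c
        · nlinarith [hσ.1]

theorem abs_profileDeriv_le_of_mem_Icc (hγ : 0 < γ) {σ₁ : ℝ} (hσ : σ ∈ Icc (2 / γ) σ₁)
    (c : ℝ) (hx : 0 ≤ x) :
    |profileDeriv γ c σ x| ≤ σ₁ * (|amp γ c σ₁| / 2) * exp (-(2 / γ) * x) := by
  have hσ₀ : 0 ≤ σ := le_trans (by positivity) hσ.1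
  calc |profileDeriv γ c σ x| ≤ σ * |profile γ c σ x| :=
        abs_profileDeriv_le hσ₀ ((div_le_iff₀' hγ).1 hσ.1) c hx
    _ ≤ σ₁ * (|amp γ c σ₁| / 2 * exp (-(2 / γ) * x)) := by
        have : 0 ≤ σ₁ := hσ₀.trans hσ.2
        gcongr ?_ * ?_
        · exact hσ.2
        · exact abs_profile_le_of_mem_Icc hγ hσ c hx
    _ = σ₁ * (|amp γ c σ₁| / 2) * exp (-(2 / γ) * x) := by ring

section Convergence

variable {ι : Type*} {l : Filter ι} [l.IsCountablyGenerated] {s : ι → ℝ}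

theorem tendsto_integral_Ioi_sq_profile_sub (hγ : 0 < γ) (c : ℝ)
    (hs : Tendsto s l (𝓝[≥] (2 / γ))) :
    Tendsto (fun i => ∫ x in Ioi 0, (profile γ c (s i) x - profile γ c (2 / γ) x) ^ 2)
      l (𝓝 0) := by
  have h₀ : 2 ≤ γ * (2 / γ) := (div_le_iff₀' hγ).1 le_rfl
  have hIcc : ∀ᶠ i in l, s i ∈ Icc (2 / γ) (2 / γ + 1) := hs (Icc_mem_nhdsGE (by linarith))
  refine tendsto_integral_Ioi_sq_sub_of_le_exp (K := |amp γ c (2 / γ + 1)| / 2) (by positivity)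
    (hIcc.mono fun i hi => continuous_profile ((div_le_iff₀' hγ).1 hi.1) c)
    (continuous_profile h₀ c)
    (hIcc.mono fun i hi x hx => abs_profile_le_of_mem_Icc hγ hi c hx.le)
    (fun x hx => abs_profile_le_of_mem_Icc hγ ⟨le_rfl, by linarith⟩ c hx.le)
    (fun x _ => (continuousAt_profile_param h₀ c x).tendsto.comp
      (tendsto_nhds_of_tendsto_nhdsWithin hs))

theorem tendsto_integral_Ioi_sq_profileDeriv_sub (hγ : 0 < γ) (c : ℝ)
    (hs : Tendsto s l (𝓝[≥] (2 / γ))) :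
    Tendsto (fun i => ∫ x in Ioi 0, (profileDeriv γ c (s i) x - profileDeriv γ c (2 / γ) x) ^ 2)
      l (𝓝 0) := by
  have h₀ : 2 ≤ γ * (2 / γ) := (div_le_iff₀' hγ).1 le_rfl
  have hIcc : ∀ᶠ i in l, s i ∈ Icc (2 / γ) (2 / γ + 1) := hs (Icc_mem_nhdsGE (by linarith))
  refine tendsto_integral_Ioi_sq_sub_of_le_exp
    (K := (2 / γ + 1) * (|amp γ c (2 / γ + 1)| / 2)) (by positivity)
    (hIcc.mono fun i hi => continuous_profileDeriv ((div_le_iff₀' hγ).1 hi.1) c)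
    (continuous_profileDeriv h₀ c)
    (hIcc.mono fun i hi x hx => abs_profileDeriv_le_of_mem_Icc hγ hi c hx.le)
    (fun x hx => abs_profileDeriv_le_of_mem_Icc hγ ⟨le_rfl, by linarith⟩ c hx.le)
    (fun x _ => (continuousAt_profileDeriv_param h₀ c x).tendsto.comp
      (tendsto_nhds_of_tendsto_nhdsWithin hs))

end Convergence

end DeltaPrimeNLS

open DeltaPrimeNLS in
/-- Linear limit λ → 0+ at fixed mass ρ of the antisymmetric stationary state of the cubic
NLS with a delta-prime interaction of strength γ: φ_λ converges strongly in
H¹(ℝ⁻) ⊕ H¹(ℝ⁺) to the linear ground state sgn(x)·√(2ρ/γ)·e^{−(2/γ)|x|} of the delta-prime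
Hamiltonian of mass ρ. -/
theorem statement16 (γ ρ : ℝ) (hγ : 0 < γ) (hρ : 0 < ρ)
    (s xb : ℝ → ℝ)
    (hs : ∀ lam, s lam = lam * ρ / 4 + 2 / γ)
    (hxb : ∀ lam, xb lam = (1 / (2 * s lam)) *
      Real.log ((γ * s lam + 2) / (γ * s lam - 2)))
    (φ : ℝ → ℝ → ℝ)
    (hφ : ∀ lam x, φ lam x = if x < 0
      then -(Real.sqrt (2 * (s lam) ^ 2 / lam) * sech (s lam * (x - xb lam)))
      else Real.sqrt (2 * (s lam) ^ 2 / lam) * sech (s lam * (x + xb lam)))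
    (g : ℝ → ℝ)
    (hg : ∀ x, g x = Real.sign x * Real.sqrt (2 * ρ / γ) * Real.exp (-(2 / γ) * |x|)) :
    Tendsto (fun lam : ℝ =>
        (∫ x : ℝ, (φ lam x - g x) ^ 2)
          + ∫ x in ({(0:ℝ)}ᶜ : Set ℝ), (deriv (φ lam) x - deriv g x) ^ 2)
      (𝓝[>] 0) (𝓝 0) := by
  set c := √(γ * ρ / 2)
  have hs_ge : ∀ lam, 0 < lam → 2 / γ ≤ s lam := fun lam hlam => by
    rw [hs]; have := mul_pos hlam hρ; linarith
  have hs_tendsto : Tendsto s (𝓝[>] 0) (𝓝[≥] (2 / γ)) := by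
    refine tendsto_nhdsWithin_of_tendsto_nhds_of_eventually_within _ ?_
      (eventually_nhdsWithin_of_forall hs_ge)
    rw [funext hs]
    exact ((by fun_prop : Continuous fun lam : ℝ => lam * ρ / 4 + 2 / γ).tendsto' 0 _
      (by ring)).mono_left nhdsWithin_le_nhds
  have hφ_eq : ∀ lam, 0 < lam → ∀ x, x ≠ 0 → φ lam x = Real.sign x * profile γ c (s lam) |x| :=
    fun lam hlam x hx => by
      rw [hφ]; exact stationaryState_eq_sign_mul_profile hγ hρ hlam (hs lam) (hxb lam) hx
  have hg_eq : ∀ x, x ≠ 0 → g x = Real.sign x * profile γ c (2 / γ) |x| := fun x _ => by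
    rw [hg, sign_mul_sqrt_mul_exp_eq_profile hγ]
  have h_eq : ∀ᶠ lam in 𝓝[>] 0,
      (∫ x, (φ lam x - g x) ^ 2) + ∫ x in {0}ᶜ, (deriv (φ lam) x - deriv g x) ^ 2 =
        2 * (∫ x in Ioi 0, (profile γ c (s lam) x - profile γ c (2 / γ) x) ^ 2) +
          2 * ∫ x in Ioi 0, (profileDeriv γ c (s lam) x - profileDeriv γ c (2 / γ) x) ^ 2 := by
    filter_upwards [self_mem_nhdsWithin] with lam (hlam : 0 < lam)
    have hσ : 2 ≤ γ * s lam := (div_le_iff₀' hγ).1 (hs_ge lam hlam)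
    have h₀ : 2 ≤ γ * (2 / γ) := (div_le_iff₀' hγ).1 le_rfl
    rw [integral_sq_sub_eq_of_eq_sign_mul_comp_abs (hφ_eq lam hlam) hg_eq,
      setIntegral_compl_zero_sq_deriv_sub_eq (hφ_eq lam hlam) hg_eq
        (fun x _ => hasDerivAt_profile hσ c x) (fun x _ => hasDerivAt_profile h₀ c x)]
  refine (tendsto_congr' h_eq).2 ?_
  simpa using ((tendsto_integral_Ioi_sq_profile_sub hγ c hs_tendsto).const_mul 2).add
    ((tendsto_integral_Ioi_sq_profileDeriv_sub hγ c hs_tendsto).const_mul 2)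

end
end

section
/- Fix λ > 0 and ρ > 0. For γ > 0, set √ω_γ := λρ/4 + 2/γ, x̄_γ := (1/(2√ω_γ))·log((γ√ω_γ + 2)/(γ√ω_γ − 2)), and define the antisymmetric stationary state φ_γ(x) := −√(2ω_γ/λ)·sech(√ω_γ(x − x̄_γ)) for x < 0 and φ_γ(x) := √(2ω_γ/λ)·sech(√ω_γ(x + x̄_γ)) for x > 0. Let g(x) := sgn(x)·(ρ√λ/(2√2))·sech((λρ/4)x). Then, as γ → +∞, ∫_ℝ |φ_γ(x) − g(x)|² dx + ∫_{ℝ∖{0}} |φ_γ'(x) − g'(x)|² dx → 0; i.e., φ_γ converges strongly in H¹(ℝ⁻) ⊕ H¹(ℝ⁺) and the modulus of the limit is the free soliton of mass ρ. -/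
/-!
On each half-line, `φ_γ` and `g` are pieces of sech profiles `x ↦ A * sech (a * (x + b))`, with
amplitude `√(2ω_γ/λ) → ρ√λ/(2√2)`, width `√ω_γ → λρ/4` and shift `±x̄_γ → 0` (as `γ√ω_γ → ∞`,
the ratio inside the logarithm tends to `1`). For large `γ` these profiles and their derivatives
are dominated by a fixed multiple of `exp (-(λρ/8)|x|)`, because `sech` and `sech' = -tanh * sech`
decay like `2 exp (-|t|)`; dominated convergence then gives `L²` convergence of the values and of
the derivatives on each half-line.
-/

open MeasureTheory Real Filter Set Topology

noncomputable section

lemma sech_pos (t : ℝ) : 0 < sech t := one_div_pos.mpr (cosh_pos t)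

lemma continuous_sech : Continuous sech :=
  continuous_const.div continuous_cosh fun t => (cosh_pos t).ne'

lemma abs_sech_le_two_mul_exp_neg_abs (t : ℝ) : |sech t| ≤ 2 * exp (-|t|) := by
  rw [abs_of_pos (sech_pos t)]
  have h : exp |t| / 2 ≤ cosh t := by
    rw [← cosh_abs, cosh_eq]
    linarith [exp_pos (-|t|)]
  calc sech t ≤ 1 / (exp |t| / 2) := one_div_le_one_div_of_le (by positivity) h
    _ = 2 * exp (-|t|) := by rw [exp_neg]; field_simp

lemma hasDerivAt_sech (t : ℝ) : HasDerivAt sech (-(tanh t * sech t)) t := by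
  have h : HasDerivAt (fun y => (cosh y)⁻¹) (-sinh t / cosh t ^ 2) t :=
    (hasDerivAt_cosh t).inv (cosh_pos t).ne'
  simp only [← one_div] at h
  exact h.congr_deriv (by rw [tanh_eq_sinh_div_cosh, sech]; ring)

lemma continuous_tanh : Continuous tanh := by
  rw [show tanh = fun t => sinh t / cosh t from funext tanh_eq_sinh_div_cosh]
  exact continuous_sinh.div continuous_cosh fun t => (cosh_pos t).ne'

lemma abs_neg_tanh_mul_sech_le (t : ℝ) : |-(tanh t * sech t)| ≤ 2 * exp (-|t|) := by
  rw [abs_neg, abs_mul, abs_of_pos (sech_pos t)]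
  calc |tanh t| * sech t ≤ 1 * sech t :=
        mul_le_mul_of_nonneg_right (abs_tanh_lt_one t).le (sech_pos t).le
    _ ≤ 2 * exp (-|t|) := by
        rw [one_mul, ← abs_of_pos (sech_pos t)]; exact abs_sech_le_two_mul_exp_neg_abs t

lemma hasDerivAt_mul_sech_comp_affine (A a b x : ℝ) :
    HasDerivAt (fun y => A * sech (a * (y + b)))
      (A * a * -(tanh (a * (x + b)) * sech (a * (x + b)))) x := by
  have h := ((hasDerivAt_sech _).comp x (((hasDerivAt_id' x).add_const b).const_mul a)).const_mul A
  exact h.congr_deriv (by ring)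

lemma integrable_exp_neg_mul_abs {k : ℝ} (hk : 0 < k) :
    Integrable fun x : ℝ => exp (-(k * |x|)) := by
  have hpos : IntegrableOn (fun x : ℝ => exp (-(k * |x|))) (Ioi 0) :=
    (exp_neg_integrableOn_Ioi 0 hk).congr_fun
      (fun x (hx : 0 < x) => by simp only [abs_of_pos hx, neg_mul]) measurableSet_Ioi
  have hneg : IntegrableOn (fun x : ℝ => exp (-(k * |x|))) (Iio 0) := by
    rw [← (Measure.measurePreserving_neg (volume : Measure ℝ)).integrableOn_comp_preimage
      (Homeomorph.neg ℝ).measurableEmbedding]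
    simpa only [Function.comp_def, abs_neg, neg_preimage, neg_Iio, neg_zero] using hpos
  rw [← integrableOn_univ, ← Iio_union_Ici (a := (0 : ℝ)), integrableOn_union,
    integrableOn_Ici_iff_integrableOn_Ioi]
  exact ⟨hneg, hpos⟩

section ExponentialDecay

variable {f : ℝ → ℝ} {C : ℝ}

lemma abs_mul_comp_affine_le (hf : ∀ u, |f u| ≤ C * exp (-|u|)) {A a b k M B : ℝ}
    (hk : 0 ≤ k) (hka : k ≤ a) (hA : |A| ≤ M) (hb : |b| ≤ B) (x : ℝ) :
    |A * f (a * (x + b))| ≤ M * C * exp (k * B) * exp (-(k * |x|)) := by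
  have hC : 0 ≤ C := by simpa using (abs_nonneg _).trans (hf 0)
  have hexp : exp (-|a * (x + b)|) ≤ exp (k * B) * exp (-(k * |x|)) := by
    rw [← exp_add, exp_le_exp, abs_mul, abs_of_nonneg (hk.trans hka)]
    have hx : |x| ≤ |x + b| + |b| := by simpa using abs_sub (x + b) b
    nlinarith [mul_le_mul_of_nonneg_left hx hk, mul_le_mul_of_nonneg_left hb hk,
      mul_le_mul_of_nonneg_right hka (abs_nonneg (x + b))]
  calc |A * f (a * (x + b))| = |A| * |f (a * (x + b))| := abs_mul _ _
    _ ≤ M * (C * (exp (k * B) * exp (-(k * |x|)))) :=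
        mul_le_mul hA ((hf _).trans (by gcongr)) (abs_nonneg _) ((abs_nonneg A).trans hA)
    _ = M * C * exp (k * B) * exp (-(k * |x|)) := by ring

lemma sq_sub_mul_comp_affine_le (hf : ∀ u, |f u| ≤ C * exp (-|u|))
    {A a b A₀ a₀ b₀ k M B : ℝ} (hk : 0 ≤ k) (hka : k ≤ a) (hka₀ : k ≤ a₀)
    (hA : |A| ≤ M) (hA₀ : |A₀| ≤ M) (hb : |b| ≤ B) (hb₀ : |b₀| ≤ B) (x : ℝ) :
    (A * f (a * (x + b)) - A₀ * f (a₀ * (x + b₀))) ^ 2 ≤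
      (2 * (M * C * exp (k * B))) ^ 2 * exp (-(2 * k * |x|)) := by
  have h := abs_mul_comp_affine_le hf hk hka hA hb x
  have h₀ := abs_mul_comp_affine_le hf hk hka₀ hA₀ hb₀ x
  have hsq : exp (-(2 * k * |x|)) = exp (-(k * |x|)) ^ 2 := by
    rw [← exp_nat_mul]; ring_nf
  rw [hsq, ← mul_pow, ← sq_abs]
  gcongr
  linarith [abs_sub (A * f (a * (x + b))) (A₀ * f (a₀ * (x + b₀)))]

theorem tendsto_setIntegral_sq_sub_mul_comp_affine {ι : Type*} {l : Filter ι}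
    [l.IsCountablyGenerated] (hfc : Continuous f) (hf : ∀ u, |f u| ≤ C * exp (-|u|))
    {A a b : ι → ℝ} {A₀ a₀ b₀ : ℝ} (ha₀ : 0 < a₀)
    (hA : Tendsto A l (𝓝 A₀)) (ha : Tendsto a l (𝓝 a₀)) (hb : Tendsto b l (𝓝 b₀))
    (S : Set ℝ) :
    Tendsto (fun i => ∫ x in S, (A i * f (a i * (x + b i)) - A₀ * f (a₀ * (x + b₀))) ^ 2)
      l (𝓝 0) := by
  have hA_le : ∀ᶠ i in l, |A i| ≤ |A₀| + 1 := hA.abs.eventually (eventually_le_nhds (by simp))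
  have ha_ge : ∀ᶠ i in l, a₀ / 2 ≤ a i := ha.eventually (eventually_ge_nhds (by linarith))
  have hb_le : ∀ᶠ i in l, |b i| ≤ |b₀| + 1 := hb.abs.eventually (eventually_le_nhds (by simp))
  have hpoint : ∀ x, Tendsto (fun i => A i * f (a i * (x + b i))) l
      (𝓝 (A₀ * f (a₀ * (x + b₀)))) := fun x =>
    hA.mul ((hfc.tendsto _).comp (ha.mul (tendsto_const_nhds.add hb)))
  simpa using tendsto_integral_filter_of_dominated_convergence
    (μ := volume.restrict S) (f := fun _ => 0)
    (F := fun i x => (A i * f (a i * (x + b i)) - A₀ * f (a₀ * (x + b₀))) ^ 2)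
    (fun x => (2 * ((|A₀| + 1) * C * exp (a₀ / 2 * (|b₀| + 1)))) ^ 2 * exp (-(2 * (a₀ / 2) * |x|)))
    (.of_forall fun i => by fun_prop)
    (by
      filter_upwards [hA_le, ha_ge, hb_le] with i hAi hai hbi
      refine ae_of_all _ fun x => ?_
      rw [norm_of_nonneg (sq_nonneg _)]
      exact sq_sub_mul_comp_affine_le hf (by positivity) hai (by linarith) hAi (by simp)
        hbi (by simp) x)
    ((integrable_exp_neg_mul_abs (by positivity)).const_mul _).integrableOn
    (ae_of_all _ fun x => by simpa using ((hpoint x).sub_const (A₀ * f (a₀ * (x + b₀)))).pow 2)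

end ExponentialDecay

def sqH1DistOn (S : Set ℝ) (u v : ℝ → ℝ) : ℝ :=
  (∫ x in S, (u x - v x) ^ 2) + ∫ x in S, (deriv u x - deriv v x) ^ 2

theorem tendsto_sqH1DistOn_of_eqOn_sech {ι : Type*} {l : Filter ι} [l.IsCountablyGenerated]
    {S : Set ℝ} (hS : IsOpen S) {u : ι → ℝ → ℝ} {v : ℝ → ℝ} {A a b : ι → ℝ} {A₀ a₀ b₀ : ℝ}
    (hu : ∀ i, EqOn (u i) (fun x => A i * sech (a i * (x + b i))) S)
    (hv : EqOn v (fun x => A₀ * sech (a₀ * (x + b₀))) S) (ha₀ : 0 < a₀)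
    (hA : Tendsto A l (𝓝 A₀)) (ha : Tendsto a l (𝓝 a₀)) (hb : Tendsto b l (𝓝 b₀)) :
    Tendsto (fun i => sqH1DistOn S (u i) v) l (𝓝 0) := by
  have hderiv {w : ℝ → ℝ} {A a b : ℝ} (hw : EqOn w (fun x => A * sech (a * (x + b))) S) :
      EqOn (deriv w) (fun x => A * a * -(tanh (a * (x + b)) * sech (a * (x + b)))) S :=
    fun x hx => (hw.deriv hS hx).trans (hasDerivAt_mul_sech_comp_affine A a b x).deriv
  have hval := tendsto_setIntegral_sq_sub_mul_comp_affine continuous_sech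
    abs_sech_le_two_mul_exp_neg_abs ha₀ hA ha hb S
  have hder := tendsto_setIntegral_sq_sub_mul_comp_affine
    (f := fun t => -(tanh t * sech t)) (continuous_tanh.mul continuous_sech).neg
    abs_neg_tanh_mul_sech_le ha₀ (hA.mul ha) ha hb S
  refine (zero_add (0 : ℝ) ▸ hval.add hder).congr fun i => ?_
  unfold sqH1DistOn
  congr 1 <;> refine setIntegral_congr_fun hS.measurableSet fun x hx => ?_
  · simp only [hu i hx, hv hx]
  · simp only [hderiv (hu i) hx, hderiv hv hx]

/-- No integrability is needed: without it the left side is the junk value `0`. -/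
lemma setIntegral_compl_zero_le {F : ℝ → ℝ} (hF : 0 ≤ F) :
    ∫ x in {0}ᶜ, F x ≤ (∫ x in Iio 0, F x) + ∫ x in Ioi 0, F x := by
  rw [← Iio_union_Ioi]
  by_cases hint : IntegrableOn F (Iio 0 ∪ Ioi 0)
  · exact (setIntegral_union ((Iic_disjoint_Ioi le_rfl).mono_left Iio_subset_Iic_self)
      measurableSet_Ioi (hint.mono_set subset_union_left) (hint.mono_set subset_union_right)).le
  · rw [integral_undef hint]
    exact add_nonneg (setIntegral_nonneg measurableSet_Iio fun x _ => hF x)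
      (setIntegral_nonneg measurableSet_Ioi fun x _ => hF x)

theorem tendsto_integral_sq_sub_add_deriv_of_sqH1DistOn {ι : Type*} {l : Filter ι}
    {u : ι → ℝ → ℝ} {v : ℝ → ℝ}
    (hneg : Tendsto (fun i => sqH1DistOn (Iio 0) (u i) v) l (𝓝 0))
    (hpos : Tendsto (fun i => sqH1DistOn (Ioi 0) (u i) v) l (𝓝 0)) :
    Tendsto (fun i => (∫ x, (u i x - v x) ^ 2) + ∫ x in {0}ᶜ, (deriv (u i) x - deriv v x) ^ 2)
      l (𝓝 0) := by
  refine tendsto_of_tendsto_of_tendsto_of_le_of_le tendsto_const_nhds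
    (zero_add (0 : ℝ) ▸ hneg.add hpos) (fun i => ?_) (fun i => ?_)
  · exact add_nonneg (integral_nonneg fun x => sq_nonneg _)
      (setIntegral_nonneg (measurableSet_singleton 0).compl fun x _ => sq_nonneg _)
  · have hwhole : ∫ x, (u i x - v x) ^ 2 = ∫ x in {0}ᶜ, (u i x - v x) ^ 2 := by
      rw [restrict_compl_singleton]
    have h₁ := setIntegral_compl_zero_le fun x => sq_nonneg (u i x - v x)
    have h₂ := setIntegral_compl_zero_le fun x => sq_nonneg (deriv (u i) x - deriv v x)
    simp only [sqH1DistOn]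
    linarith

lemma tendsto_log_add_two_div_sub_two {ι : Type*} {l : Filter ι} {t : ι → ℝ}
    (ht : Tendsto t l atTop) : Tendsto (fun i => log ((t i + 2) / (t i - 2))) l (𝓝 0) := by
  have hinv : Tendsto (fun i => 2 / t i) l (𝓝 0) := tendsto_const_nhds.div_atTop ht
  have hratio : Tendsto (fun i => (1 + 2 / t i) / (1 - 2 / t i)) l (𝓝 1) := by
    have h := ((tendsto_const_nhds (x := (1 : ℝ))).add hinv).div
      ((tendsto_const_nhds (x := (1 : ℝ))).sub hinv) (by norm_num)
    rwa [add_zero, sub_zero, div_one] at h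
  have hlog := ((continuousAt_log one_ne_zero).tendsto.comp hratio)
  rw [log_one] at hlog
  refine hlog.congr' ?_
  filter_upwards [ht.eventually_gt_atTop 0] with i hi
  simp only [Function.comp_apply]
  congr 1
  field_simp

lemma sqrt_two_mul_sq_div_eq {lam ρ : ℝ} (hlam : 0 < lam) (hρ : 0 < ρ) :
    √(2 * (lam * ρ / 4) ^ 2 / lam) = ρ * √lam / (2 * √2) := by
  have h2 : √2 ^ 2 = 2 := sq_sqrt zero_le_two
  have hl : √lam ^ 2 = lam := sq_sqrt hlam.le
  have h2p : 0 < √2 := by positivity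
  have hlp : 0 < √lam := sqrt_pos.mpr hlam
  rw [show 2 * (lam * ρ / 4) ^ 2 / lam = (ρ * √lam / (2 * √2)) ^ 2 by
    field_simp; linear_combination 8 * lam * h2 - 16 * hl]
  exact sqrt_sq (by positivity)

/-- No-defect limit γ → +∞ at fixed mass ρ of the antisymmetric stationary state of the
cubic NLS with a delta-prime interaction: φ_γ converges strongly in H¹(ℝ⁻) ⊕ H¹(ℝ⁺) to
sgn(x) times the free soliton of mass ρ. Here `s γ = √ω_γ = λρ/4 + 2/γ`. -/
theorem statement18 (lam ρ : ℝ) (hlam : 0 < lam) (hρ : 0 < ρ)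
    (s xb : ℝ → ℝ)
    (hs : ∀ γ, s γ = lam * ρ / 4 + 2 / γ)
    (hxb : ∀ γ, xb γ = (1 / (2 * s γ)) *
      Real.log ((γ * s γ + 2) / (γ * s γ - 2)))
    (φ : ℝ → ℝ → ℝ)
    (hφ : ∀ γ x, φ γ x = if x < 0
      then -(Real.sqrt (2 * (s γ) ^ 2 / lam) * sech (s γ * (x - xb γ)))
      else Real.sqrt (2 * (s γ) ^ 2 / lam) * sech (s γ * (x + xb γ)))
    (g : ℝ → ℝ)
    (hg : ∀ x, g x = Real.sign x * (ρ * Real.sqrt lam / (2 * Real.sqrt 2)) *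
      sech ((lam * ρ / 4) * x)) :
    Tendsto (fun γ : ℝ =>
        (∫ x : ℝ, (φ γ x - g x) ^ 2)
          + ∫ x in ({(0:ℝ)}ᶜ : Set ℝ), (deriv (φ γ) x - deriv g x) ^ 2)
      atTop (𝓝 0) := by
  have hc : 0 < lam * ρ / 4 := by positivity
  have hs_lim : Tendsto s atTop (𝓝 (lam * ρ / 4)) := by
    have h := (tendsto_const_nhds (x := lam * ρ / 4)).add
      ((tendsto_const_nhds (x := (2 : ℝ))).div_atTop tendsto_id)
    rw [add_zero] at h
    exact h.congr fun γ => (hs γ).symm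
  have hxb_lim : Tendsto xb atTop (𝓝 0) := by
    have hcoef : Tendsto (fun γ => 1 / (2 * s γ)) atTop (𝓝 (1 / (2 * (lam * ρ / 4)))) :=
      tendsto_const_nhds.div (hs_lim.const_mul 2) (by positivity)
    have h := hcoef.mul (tendsto_log_add_two_div_sub_two (tendsto_id.atTop_mul_pos hc hs_lim))
    rw [mul_zero] at h
    exact h.congr fun γ => (hxb γ).symm
  have hA_lim : Tendsto (fun γ => √(2 * s γ ^ 2 / lam)) atTop
      (𝓝 (ρ * √lam / (2 * √2))) := by
    rw [← sqrt_two_mul_sq_div_eq hlam hρ]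
    exact ((by fun_prop : Continuous fun t : ℝ => √(2 * t ^ 2 / lam)).tendsto (lam * ρ / 4)).comp
      hs_lim
  refine tendsto_integral_sq_sub_add_deriv_of_sqH1DistOn
    (tendsto_sqH1DistOn_of_eqOn_sech isOpen_Iio (fun γ x (hx : x < 0) => ?_)
      (fun x (hx : x < 0) => ?_) hc hA_lim.neg hs_lim hxb_lim.neg)
    (tendsto_sqH1DistOn_of_eqOn_sech isOpen_Ioi (fun γ x (hx : 0 < x) => ?_)
      (fun x (hx : 0 < x) => ?_) hc hA_lim hs_lim hxb_lim)
  · simp only [hφ, if_pos hx, sub_eq_add_neg, neg_mul]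
  · simp only [hg, sign_of_neg hx, neg_zero, add_zero]; ring
  · simp only [hφ, if_neg hx.not_gt]
  · simp only [hg, sign_of_pos hx, add_zero]; ring

end
end
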